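/- arXiv:1810.06354 — 4 statements merged into one kernel-verified Lean document; each statement's English description precedes it below -/
import Mathlib

section
/- For every integer m ≥ 3, the independence number of the pair graph of the path P_m equals ⌊(m+1)²/4⌋. -/
/-- The independence number of a graph: the supremum of sizes of independent sets. -/
noncomputable def indepNum {V : Type*} (G : SimpleGraph V) : ℕ :=
  sSup {n | ∃ s : Finset V, s.card = n ∧ ∀ a ∈ s, ∀ b ∈ s, ¬ G.Adj a b}

/-- The path graph on `n` vertices `0, 1, ..., n-1`. -/
def pathG (n : ℕ) : SimpleGraph (Fin n) :=
  SimpleGraph.fromRel (fun i j => (i : ℕ) + 1 = (j : ℕ))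

/-- The cycle graph on `n` vertices `0, 1, ..., n-1`. -/
def cycleG (n : ℕ) : SimpleGraph (Fin n) :=
  SimpleGraph.fromRel (fun i j => (i : ℕ) + 1 = (j : ℕ) ∨ ((i : ℕ) = 0 ∧ (j : ℕ) = n - 1))

/-- The join of a graph `G` with a single extra vertex. -/
def joinK1 {V : Type*} (G : SimpleGraph V) : SimpleGraph (V ⊕ Unit) :=
  SimpleGraph.fromRel (fun a b =>
    (∃ x y, G.Adj x y ∧ a = Sum.inl x ∧ b = Sum.inl y) ∨ (a.isLeft ∧ b.isRight))

/-- The fan graph `F_{m,1} = P_m + K_1`. -/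
def fanG (m : ℕ) : SimpleGraph (Fin m ⊕ Unit) := joinK1 (pathG m)

/-- The wheel graph `W_{m,1} = C_m + K_1`. -/
def wheelG (m : ℕ) : SimpleGraph (Fin m ⊕ Unit) := joinK1 (cycleG m)

/-- The `k`-token graph: vertices are `k`-subsets of `V(G)`, two subsets adjacent
whenever their symmetric difference is an edge of `G`. -/
def tokenGraph {V : Type*} [DecidableEq V] (k : ℕ) (G : SimpleGraph V) :
    SimpleGraph {A : Finset V // A.card = k} :=
  SimpleGraph.fromRel (fun A B => ∃ a b : V, G.Adj a b ∧ symmDiff A.1 B.1 = {a, b})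

/-- The double vertex graph `G^(2)`: the `2`-token graph of `G`. -/
def doubleVertexGraph {V : Type*} [DecidableEq V] (G : SimpleGraph V) :
    SimpleGraph {A : Finset V // A.card = 2} :=
  tokenGraph 2 G

/-- The pair graph (complete double vertex graph) `C(G)`: vertices are the 2-multisets
of `V(G)`; `{a,x}` and `{a,y}` (distinct) are adjacent iff `x` and `y` are adjacent in `G`. -/
def pairGraph {V : Type*} (G : SimpleGraph V) : SimpleGraph (Sym2 V) :=
  SimpleGraph.fromRel (fun s t => ∃ a x y : V, G.Adj x y ∧ s = s(a, x) ∧ t = s(a, y))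


/-!
Weight the vertex `{i, j}` of the pair graph of `P_m` by `i + j`. An edge `{a, x} ~ {a, x ± 1}`
changes the weight by one, so the even-weight vertices are independent. Conversely, rounding
`{i, j}` (`i ≤ j`, `i + j` odd) down to `{i, j - 1}` sends every vertex to an even-weight one, and
two distinct vertices with the same image are adjacent, so an independent set is no larger than
the set of even-weight vertices. These correspond to the pairs `i ≤ j < m` with `i + j` even;
column `j` holds `⌊j/2⌋ + 1` of them, `⌊(m+1)²/4⌋` in total.
-/

open Finset

theorem indepNum_eq_simpleGraph_indepNum {V : Type*} (G : SimpleGraph V) :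
    indepNum G = G.indepNum := by
  unfold indepNum SimpleGraph.indepNum
  congr! 3 with n
  refine exists_congr fun s => ?_
  rw [SimpleGraph.isNIndepSet_iff, and_comm]
  exact and_congr_left' ⟨fun h a ha b hb _ => h a ha b hb,
    fun h a ha b hb hab => h ha hb (G.ne_of_adj hab) hab⟩

theorem SimpleGraph.IsIndepSet.card_le_of_mapsTo {V W : Type*} {G : SimpleGraph V}
    {s : Finset V} {t : Finset W} {f : V → W} (hs : G.IsIndepSet s)
    (hf : Set.MapsTo f s t) (hfib : ∀ v w, v ≠ w → f v = f w → G.Adj v w) : #s ≤ #t :=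
  card_le_card_of_injOn f hf fun v hv w hw hvw => by
    by_contra hne
    exact hs hv hw hne (hfib v w hne hvw)

theorem pairGraph_adj {V : Type*} {G : SimpleGraph V} {s t : Sym2 V} :
    (pairGraph G).Adj s t ↔ s ≠ t ∧ ∃ a x y, G.Adj x y ∧ s = s(a, x) ∧ t = s(a, y) := by
  rw [pairGraph, SimpleGraph.fromRel_adj]
  refine and_congr_right fun _ => ⟨?_, Or.inl⟩
  rintro (h | ⟨a, x, y, hxy, ht, hs⟩)
  · exact h
  · exact ⟨a, y, x, hxy.symm, hs, ht⟩

theorem pathG_adj {n : ℕ} {i j : Fin n} :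
    (pathG n).Adj i j ↔ (i : ℕ) + 1 = j ∨ (j : ℕ) + 1 = i := by
  rw [pathG, SimpleGraph.fromRel_adj, and_iff_right_iff_imp]
  rintro h rfl
  omega

theorem Sym2.mk_inf_sup {α : Type*} [LinearOrder α] (s : Sym2 α) : s(s.inf, s.sup) = s :=
  Sym2.sortEquiv.symm_apply_apply s

def evenTriangle (m : ℕ) : Finset (ℕ × ℕ) :=
  {p ∈ range m ×ˢ range m | p.1 ≤ p.2 ∧ Even (p.1 + p.2)}

theorem mem_evenTriangle {m : ℕ} {p : ℕ × ℕ} :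
    p ∈ evenTriangle m ↔ p.1 ≤ p.2 ∧ p.2 < m ∧ Even (p.1 + p.2) := by
  simp only [evenTriangle, mem_filter, mem_product, mem_range]
  exact ⟨fun ⟨⟨_, hj⟩, hij, heven⟩ => ⟨hij, hj, heven⟩,
    fun ⟨hij, hj, heven⟩ => ⟨⟨by omega, hj⟩, hij, heven⟩⟩

theorem card_filter_even_add_range (n : ℕ) :
    #{i ∈ range (n + 1) | Even (i + n)} = n / 2 + 1 := by
  have himage :
      {i ∈ range (n + 1) | Even (i + n)} = (range (n / 2 + 1)).image (n - 2 * ·) := by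
    ext i
    simp only [mem_filter, mem_range, mem_image, Nat.even_iff]
    exact ⟨fun _ => ⟨(n - i) / 2, by omega, by omega⟩, by rintro ⟨k, hk, rfl⟩; omega⟩
  rw [himage, card_image_of_injOn, card_range]
  intro a ha b hb hab
  simp only [coe_range, Set.mem_Iio] at ha hb hab
  omega

theorem evenTriangle_succ (m : ℕ) :
    evenTriangle (m + 1) =
      evenTriangle m ∪ {i ∈ range (m + 1) | Even (i + m)}.map (.sectL ℕ m) := by
  ext ⟨i, j⟩
  simp only [mem_union, mem_map, mem_filter, mem_range, mem_evenTriangle,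
    Function.Embedding.sectL_apply, Prod.mk.injEq]
  constructor
  · rintro ⟨hij, hj, heven⟩
    rcases Nat.lt_succ_iff_lt_or_eq.1 hj with hj | rfl
    · exact .inl ⟨hij, hj, heven⟩
    · exact .inr ⟨i, ⟨by omega, heven⟩, rfl, rfl⟩
  · rintro (⟨hij, hj, heven⟩ | ⟨i, ⟨hi, heven⟩, rfl, rfl⟩)
    · exact ⟨hij, by omega, heven⟩
    · exact ⟨by omega, by omega, heven⟩

-- Stated with the remainder so that `omega` can take the floor in `card_evenTriangle`.
theorem four_mul_card_evenTriangle (m : ℕ) :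
    4 * #(evenTriangle m) + (m + 1) % 2 = (m + 1) ^ 2 := by
  induction m with
  | zero => rfl
  | succ m ih =>
    have hdisj :
        Disjoint (evenTriangle m) ({i ∈ range (m + 1) | Even (i + m)}.map (.sectL ℕ m)) := by
      refine disjoint_left.2 fun p hp hp' => ?_
      obtain ⟨i, -, rfl⟩ := mem_map.1 hp'
      exact (mem_evenTriangle.1 hp).2.1.ne rfl
    rw [evenTriangle_succ, card_union_of_disjoint hdisj, card_map, card_filter_even_add_range]
    have hsq : (m + 1 + 1) ^ 2 = (m + 1) ^ 2 + 2 * m + 3 := by ring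
    omega

theorem card_evenTriangle (m : ℕ) : #(evenTriangle m) = (m + 1) ^ 2 / 4 := by
  have := four_mul_card_evenTriangle m
  omega

section PathPairs

variable {m : ℕ}

def pairWeight (s : Sym2 (Fin m)) : ℕ := (s.inf : ℕ) + s.sup

theorem pairWeight_mk (a b : Fin m) : pairWeight s(a, b) = a + b := by
  simp [pairWeight, Fin.coe_min, Fin.coe_max, min_add_max]

theorem pairWeight_add_one_eq_or_of_adj {s t : Sym2 (Fin m)}
    (h : (pairGraph (pathG m)).Adj s t) :
    pairWeight s + 1 = pairWeight t ∨ pairWeight t + 1 = pairWeight s := by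
  obtain ⟨-, a, x, y, hxy, rfl, rfl⟩ := pairGraph_adj.1 h
  rw [pathG_adj] at hxy
  simp only [pairWeight_mk]
  omega

theorem isIndepSet_even_pairWeight :
    (pairGraph (pathG m)).IsIndepSet {s | Even (pairWeight s)} := by
  intro s hs t ht _ hst
  simp only [Set.mem_ofPred_eq, Nat.even_iff] at hs ht
  have := pairWeight_add_one_eq_or_of_adj hst
  omega

def toEvenTriangle (s : Sym2 (Fin m)) : ℕ × ℕ := (s.inf, s.sup - pairWeight s % 2)

theorem toEvenTriangle_mem (s : Sym2 (Fin m)) : toEvenTriangle s ∈ evenTriangle m := by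
  have hle : (s.inf : ℕ) ≤ s.sup := s.inf_le_sup
  have hlt : (s.sup : ℕ) < m := s.sup.isLt
  simp only [mem_evenTriangle, toEvenTriangle, pairWeight, Nat.even_iff]
  omega

theorem adj_of_toEvenTriangle_eq {s t : Sym2 (Fin m)} (hne : s ≠ t)
    (h : toEvenTriangle s = toEvenTriangle t) :
    (pairGraph (pathG m)).Adj s t := by
  have hs : (s.inf : ℕ) ≤ s.sup := s.inf_le_sup
  have ht : (t.inf : ℕ) ≤ t.sup := t.inf_le_sup
  simp only [toEvenTriangle, pairWeight, Prod.mk.injEq] at h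
  obtain ⟨hinf, hsup⟩ := h
  have hsup' : (s.sup : ℕ) + 1 = t.sup ∨ (t.sup : ℕ) + 1 = s.sup := by
    by_contra hsup_ne
    exact hne (Sym2.inf_eq_inf_and_sup_eq_sup.1 ⟨Fin.ext hinf, Fin.ext (by omega)⟩)
  refine pairGraph_adj.2 ⟨hne, s.inf, s.sup, t.sup, pathG_adj.2 hsup', s.mk_inf_sup.symm, ?_⟩
  rw [Fin.ext hinf, t.mk_inf_sup]

theorem card_le_card_evenTriangle_of_isIndepSet {S : Finset (Sym2 (Fin m))}
    (hS : (pairGraph (pathG m)).IsIndepSet S) : #S ≤ #(evenTriangle m) :=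
  hS.card_le_of_mapsTo (fun s _ => toEvenTriangle_mem s) fun _ _ => adj_of_toEvenTriangle_eq

theorem card_evenTriangle_le_card_even_pairWeight :
    #(evenTriangle m) ≤ #{s : Sym2 (Fin m) | Even (pairWeight s)} := by
  refine card_le_card_of_surjOn toEvenTriangle fun p hp => ?_
  obtain ⟨hle, hlt, heven⟩ := mem_evenTriangle.1 hp
  refine ⟨s(⟨p.1, by omega⟩, ⟨p.2, hlt⟩), ?_, ?_⟩
  · simpa [pairWeight_mk] using heven
  · simp [toEvenTriangle, pairWeight_mk, Nat.even_iff.1 heven, hle]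

end PathPairs

theorem indepNum_pairGraph_path_general (m : ℕ) :
    indepNum (pairGraph (pathG m)) = (m + 1) ^ 2 / 4 := by
  rw [indepNum_eq_simpleGraph_indepNum, ← card_evenTriangle]
  refine le_antisymm ?_ ?_
  · obtain ⟨S, hS⟩ := (pairGraph (pathG m)).exists_isNIndepSet_indepNum
    exact hS.card_eq ▸ card_le_card_evenTriangle_of_isIndepSet hS.isIndepSet
  · refine card_evenTriangle_le_card_even_pairWeight.trans ?_
    refine SimpleGraph.IsIndepSet.card_le_indepNum ?_
    simpa using isIndepSet_even_pairWeight

/-- For every integer `m ≥ 3`, the independence number of the pair graph of the path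
`P_m` equals `⌊(m+1)²/4⌋`. -/
theorem indepNum_pairGraph_path (m : ℕ) (hm : 3 ≤ m) :
    indepNum (pairGraph (pathG m)) = (m + 1) ^ 2 / 4 :=
  indepNum_pairGraph_path_general m
end

section
/- Let m ≥ 4, let T_m denote the double vertex graph of the path P_m on vertices {1,…,m}, and for i ∈ {1,…,m} let R_i = {{i,j} : j ∈ {1,…,m}, j ≠ i}. Then the independence number of the induced subgraph T_m − R_i equals ⌊(m−1)²/4⌋, the independence number of T_{m−1}, for every i. -/
/-!
Relabelling the vertices of `P_m` other than `i` by `i.succAbove` turns `T_m − R_i` into the double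
vertex graph of the path `0 - 1 - ⋯ - (m - 2)` with the edge `{i - 1, i}` cut, whose vertices we
write as pairs `x < y`. Every edge changes `x + y` by one, so the `⌊(m - 1)² / 4⌋` pairs of odd sum
are independent. Conversely, the pairs of even sum can be matched injectively to adjacent pairs of
odd sum, so no independent set is larger.
-/

section IndepNum

variable {V W : Type*} {G : SimpleGraph V}

theorem indepNum_eq_card {S : Finset V} (hS : ∀ a ∈ S, ∀ b ∈ S, ¬ G.Adj a b)
    (hmax : ∀ t : Finset V, (∀ a ∈ t, ∀ b ∈ t, ¬ G.Adj a b) → t.card ≤ S.card) :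
    indepNum G = S.card :=
  IsGreatest.csSup_eq ⟨⟨S, rfl, hS⟩, by rintro _ ⟨t, rfl, ht⟩; exact hmax t ht⟩

theorem card_le_of_injOn_adj {S t : Finset V} (f : V → V) (hfS : ∀ v ∉ S, f v ∈ S)
    (hadj : ∀ v ∉ S, G.Adj v (f v)) (hinj : Set.InjOn f {v | v ∉ S})
    (ht : ∀ a ∈ t, ∀ b ∈ t, ¬ G.Adj a b) : t.card ≤ S.card := by
  classical
  refine Finset.card_le_card_of_injOn (fun v => if v ∈ S then v else f v) ?_ ?_
  · intro v _
    dsimp only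
    split_ifs with hv
    exacts [hv, hfS v hv]
  · intro u hu v hv huv
    dsimp only at huv
    split_ifs at huv with hu' hv' hv'
    · exact huv
    · exact absurd (huv ▸ hadj v hv') (ht v hv u hu)
    · exact absurd (huv ▸ hadj u hu') (ht u hu v hv)
    · exact hinj hu' hv' huv

theorem forall_not_adj_map {H : SimpleGraph W} (f : G ↪g H) {s : Finset V}
    (hs : ∀ a ∈ s, ∀ b ∈ s, ¬ G.Adj a b) :
    ∀ a ∈ s.map f.toEmbedding, ∀ b ∈ s.map f.toEmbedding, ¬ H.Adj a b := by
  simpa [Finset.forall_mem_map] using hs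

theorem indepNum_congr {H : SimpleGraph W} (e : G ≃g H) : indepNum G = indepNum H := by
  unfold indepNum
  congr 1
  ext k
  constructor
  · rintro ⟨s, rfl, hs⟩
    exact ⟨_, Finset.card_map _, forall_not_adj_map e.toEmbedding hs⟩
  · rintro ⟨s, rfl, hs⟩
    exact ⟨_, Finset.card_map _, forall_not_adj_map e.symm.toEmbedding hs⟩

end IndepNum

theorem tokenGraph_two_adj {V : Type*} [DecidableEq V] {G : SimpleGraph V}
    {A B : {A : Finset V // A.card = 2}} {a b c d : V} (hA : A.1 = {a, b}) (hB : B.1 = {c, d}) :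
    (tokenGraph 2 G).Adj A B ↔
      (a = c ∧ G.Adj b d) ∨ (a = d ∧ G.Adj b c) ∨ (b = c ∧ G.Adj a d) ∨ (b = d ∧ G.Adj a c) := by
  have hab : a ≠ b := by rintro rfl; simpa [hA] using A.2
  have hcd : c ≠ d := by rintro rfl; simpa [hB] using B.2
  rw [tokenGraph, SimpleGraph.fromRel_adj, ne_eq, Subtype.ext_iff, hA, hB,
    symmDiff_comm ({c, d} : Finset V)]
  simp only [Finset.ext_iff, Finset.mem_symmDiff, Finset.mem_insert, Finset.mem_singleton]
  constructor
  · rintro ⟨-, ⟨x, y, hxy, h⟩ | ⟨x, y, hxy, h⟩⟩ <;>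
    · have := G.ne_of_adj hxy
      have := h a; have := h b; have := h c; have := h d; have := h x; have := h y
      grind [SimpleGraph.Adj.symm]
  · rintro (⟨he, h⟩ | ⟨he, h⟩ | ⟨he, h⟩ | ⟨he, h⟩) <;>
    · have := G.ne_of_adj h
      refine ⟨fun h' => ?_, Or.inl ⟨_, _, h, fun z => by grind⟩⟩
      have := h' a; have := h' b; have := h' c; have := h' d
      grind

theorem Fin.val_succAbove_eq_ite {n : ℕ} (p : Fin (n + 1)) (x : Fin n) :
    (p.succAbove x : ℕ) = if (x : ℕ) < p then (x : ℕ) else (x : ℕ) + 1 := by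
  unfold Fin.succAbove
  split_ifs <;> simp_all [Fin.lt_def]

def CutStep (t u v : ℕ) : Prop := (u + 1 = v ∨ v + 1 = u) ∧ max u v ≠ t

abbrev LtPair (n : ℕ) := {p : ℕ × ℕ // p.1 < p.2 ∧ p.2 < n}

/-- The double vertex graph of the path `0 - 1 - ⋯ - (n - 1)` with the edge `{t - 1, t}` cut,
its vertices written as pairs `x < y`. -/
def cutPathPairGraph (n t : ℕ) : SimpleGraph (LtPair n) where
  Adj p q := (p.1.1 = q.1.1 ∧ CutStep t p.1.2 q.1.2) ∨ (p.1.2 = q.1.2 ∧ CutStep t p.1.1 q.1.1)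
  symm := ⟨fun _ _ => by unfold CutStep; omega⟩
  loopless := ⟨fun _ => by unfold CutStep; omega⟩

def oddPairs (n : ℕ) : Finset (LtPair n) :=
  ((Finset.range n ×ˢ Finset.range n).filter fun p => (p.1 + p.2) % 2 = 1).subtype _

theorem mem_oddPairs {n : ℕ} {p : LtPair n} : p ∈ oddPairs n ↔ (p.1.1 + p.1.2) % 2 = 1 := by
  have := p.2
  simp only [oddPairs, Finset.mem_subtype, Finset.mem_filter, Finset.mem_product, Finset.mem_range]
  omega

theorem Nat.sq_div_four_eq_mul (n : ℕ) : n ^ 2 / 4 = (n + 1) / 2 * (n / 2) := by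
  obtain ⟨k, rfl | rfl⟩ := Nat.even_or_odd' n
  · rw [show (2 * k) ^ 2 = 4 * (k * k) by ring, show (2 * k + 1) / 2 = k by omega,
      show 2 * k / 2 = k by omega]
    omega
  · rw [show (2 * k + 1) ^ 2 = 4 * (k * k + k) + 1 by ring, show (2 * k + 1 + 1) / 2 = k + 1 by omega,
      show (2 * k + 1) / 2 = k by omega, show (k + 1) * k = k * k + k by ring]
    omega

theorem card_oddPairs (n : ℕ) : (oddPairs n).card = n ^ 2 / 4 := by
  rw [Nat.sq_div_four_eq_mul, ← Finset.card_range ((n + 1) / 2), ← Finset.card_range (n / 2),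
    ← Finset.card_product]
  refine Finset.card_nbij
    (fun p => if p.1.1 % 2 = 0 then (p.1.1 / 2, p.1.2 / 2) else (p.1.2 / 2, p.1.1 / 2))
    ?_ ?_ ?_
  · intro p hp
    have := p.2
    rw [Finset.mem_coe, mem_oddPairs] at hp
    simp only [Finset.coe_product, Set.mem_prod, Finset.coe_range, Set.mem_Iio]
    split_ifs <;> omega
  · intro p hp q hq hpq
    have := p.2; have := q.2
    rw [Finset.mem_coe, mem_oddPairs] at hp hq
    simp only at hpq
    apply Subtype.ext
    split_ifs at hpq <;> simp only [Prod.mk.injEq] at hpq <;> ext <;> omega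
  · rintro ⟨j, k⟩ hjk
    simp only [Finset.coe_product, Set.mem_prod, Finset.coe_range, Set.mem_Iio] at hjk
    refine ⟨⟨(min (2 * j) (2 * k + 1), max (2 * j) (2 * k + 1)), by omega⟩, ?_, ?_⟩
    · rw [Finset.mem_coe, mem_oddPairs]
      dsimp only
      omega
    · simp only; split_ifs <;> simp only [Prod.mk.injEq] <;> omega

theorem oddPairs_forall_not_adj (n t : ℕ) :
    ∀ p ∈ oddPairs n, ∀ q ∈ oddPairs n, ¬ (cutPathPairGraph n t).Adj p q := by
  intro p hp q hq
  rw [mem_oddPairs] at hp hq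
  change ¬ ((_ ∧ CutStep _ _ _) ∨ (_ ∧ CutStep _ _ _))
  unfold CutStep
  omega

def blockPartner (b u : ℕ) : ℕ := if (u - b) % 2 = 0 then u + 1 else u - 1

/-- The partner of a pair `x < y` of even sum. A pair on one side of the cut moves `y` down and
stays on that side. A pair with `x < t ≤ y` stays straddling: it replaces `y` by its
`blockPartner` in `[t, n)` if that block has even length, otherwise `x` by its `blockPartner` in
`[0, t)` if `t` is even, otherwise in `[1, t)`, where `(0, y)` moves `y` down instead. -/
def cutMatch (n t x y : ℕ) : ℕ × ℕ :=
  if y < t ∨ t ≤ x then (x, y - 1)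
  else if (n - t) % 2 = 0 then (x, blockPartner t y)
  else if t % 2 = 0 then (blockPartner 0 x, y)
  else if x = 0 then (0, y - 1)
  else (blockPartner 1 x, y)

theorem cutMatch_spec {n t x y : ℕ} (hxy : x < y) (hy : y < n) (he : (x + y) % 2 = 0) :
    (cutMatch n t x y).1 < (cutMatch n t x y).2 ∧ (cutMatch n t x y).2 < n ∧
      ((cutMatch n t x y).1 + (cutMatch n t x y).2) % 2 = 1 ∧
      ((x = (cutMatch n t x y).1 ∧ CutStep t y (cutMatch n t x y).2) ∨
        (y = (cutMatch n t x y).2 ∧ CutStep t x (cutMatch n t x y).1)) := by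
  unfold cutMatch blockPartner CutStep
  split_ifs <;> omega

theorem cutMatch_inj {n t x y x' y' : ℕ} (he : (x + y) % 2 = 0) (he' : (x' + y') % 2 = 0)
    (h : cutMatch n t x y = cutMatch n t x' y') : x = x' ∧ y = y' := by
  unfold cutMatch blockPartner at h
  split_ifs at h <;> simp only [Prod.mk.injEq] at h <;> omega

-- The fallback `p` is only taken on pairs of odd sum, which `matchPair` is never applied to.
def matchPair (n t : ℕ) (p : LtPair n) : LtPair n :=
  if h : (cutMatch n t p.1.1 p.1.2).1 < (cutMatch n t p.1.1 p.1.2).2 ∧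
      (cutMatch n t p.1.1 p.1.2).2 < n then ⟨_, h⟩ else p

section MatchPair

variable {n t : ℕ} {p : LtPair n}

theorem even_of_not_mem_oddPairs (hp : p ∉ oddPairs n) : (p.1.1 + p.1.2) % 2 = 0 := by
  rw [mem_oddPairs] at hp
  omega

theorem matchPair_val (hp : p ∉ oddPairs n) : (matchPair n t p).1 = cutMatch n t p.1.1 p.1.2 := by
  obtain ⟨h1, h2, -⟩ := cutMatch_spec (t := t) p.2.1 p.2.2 (even_of_not_mem_oddPairs hp)
  rw [matchPair, dif_pos ⟨h1, h2⟩]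

theorem matchPair_mem_oddPairs (hp : p ∉ oddPairs n) : matchPair n t p ∈ oddPairs n := by
  rw [mem_oddPairs, matchPair_val hp]
  exact (cutMatch_spec p.2.1 p.2.2 (even_of_not_mem_oddPairs hp)).2.2.1

theorem adj_matchPair (hp : p ∉ oddPairs n) : (cutPathPairGraph n t).Adj p (matchPair n t p) := by
  change (_ ∧ _) ∨ (_ ∧ _)
  rw [matchPair_val hp]
  exact (cutMatch_spec p.2.1 p.2.2 (even_of_not_mem_oddPairs hp)).2.2.2

theorem matchPair_injOn : Set.InjOn (matchPair n t) {p | p ∉ oddPairs n} := by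
  intro p hp q hq hpq
  have hval := congrArg Subtype.val hpq
  rw [matchPair_val hp, matchPair_val hq] at hval
  obtain ⟨h1, h2⟩ :=
    cutMatch_inj (even_of_not_mem_oddPairs hp) (even_of_not_mem_oddPairs hq) hval
  exact Subtype.ext (Prod.ext h1 h2)

end MatchPair

theorem indepNum_cutPathPairGraph (n t : ℕ) : indepNum (cutPathPairGraph n t) = n ^ 2 / 4 := by
  rw [← card_oddPairs]
  exact indepNum_eq_card (oddPairs_forall_not_adj n t) fun s hs =>
    card_le_of_injOn_adj _ (fun _ => matchPair_mem_oddPairs) (fun _ => adj_matchPair)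
      matchPair_injOn hs

section Relabel

variable {n : ℕ} (i : Fin (n + 1))

def ofLtPair (p : LtPair n) : {A : {A : Finset (Fin (n + 1)) // A.card = 2} | i ∉ A.1} :=
  ⟨⟨{i.succAbove ⟨p.1.1, p.2.1.trans p.2.2⟩, i.succAbove ⟨p.1.2, p.2.2⟩},
    Finset.card_pair (i.succAbove_right_injective.ne (Fin.ne_of_val_ne p.2.1.ne))⟩,
    by simp⟩

theorem ofLtPair_injective : Function.Injective (ofLtPair i) := by
  intro p q h
  have h' := congrArg (fun A => (A.1.1 : Set (Fin (n + 1)))) h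
  simp only [ofLtPair, Finset.coe_pair, Set.pair_eq_pair_iff, Fin.ext_iff,
    Fin.val_succAbove_eq_ite] at h'
  have := p.2; have := q.2
  apply Subtype.ext
  ext <;> split_ifs at h' <;> omega

theorem ofLtPair_surjective : Function.Surjective (ofLtPair i) := by
  rintro ⟨⟨A, hA⟩, hiA⟩
  obtain ⟨x, y, hxy, rfl⟩ := Finset.card_eq_two.mp hA
  simp only [Set.mem_ofPred_eq, Finset.mem_insert, Finset.mem_singleton, not_or] at hiA
  obtain ⟨x, rfl⟩ := Fin.exists_succAbove_eq (Ne.symm hiA.1)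
  obtain ⟨y, rfl⟩ := Fin.exists_succAbove_eq (Ne.symm hiA.2)
  rcases lt_or_gt_of_ne (i.succAbove_right_injective.ne_iff.mp hxy) with hlt | hlt
  · exact ⟨⟨(x, y), hlt, y.2⟩, rfl⟩
  · exact ⟨⟨(y, x), hlt, x.2⟩, Subtype.ext (Subtype.ext (Finset.pair_comm _ _))⟩

theorem adj_ofLtPair_iff (p q : LtPair n) :
    (SimpleGraph.induce {A : {A : Finset (Fin (n + 1)) // A.card = 2} | i ∉ A.1}
        (doubleVertexGraph (pathG (n + 1)))).Adj (ofLtPair i p) (ofLtPair i q) ↔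
      (cutPathPairGraph n i).Adj p q := by
  rw [SimpleGraph.induce_adj, doubleVertexGraph, tokenGraph_two_adj rfl rfl]
  simp only [pathG, SimpleGraph.fromRel_adj, ne_eq, Fin.ext_iff, Fin.val_succAbove_eq_ite]
  change _ ↔ (_ ∧ CutStep _ _ _) ∨ (_ ∧ CutStep _ _ _)
  unfold CutStep
  have := p.2; have := q.2
  split_ifs <;> omega

noncomputable def cutPathPairIso : cutPathPairGraph n i ≃g
    SimpleGraph.induce {A : {A : Finset (Fin (n + 1)) // A.card = 2} | i ∉ A.1}
      (doubleVertexGraph (pathG (n + 1))) where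
  toEquiv := Equiv.ofBijective (ofLtPair i) ⟨ofLtPair_injective i, ofLtPair_surjective i⟩
  map_rel_iff' := adj_ofLtPair_iff i _ _

end Relabel

theorem indepNum_Tm_delete_Ri_general (m : ℕ) (i : Fin m) :
    indepNum (SimpleGraph.induce
        {A : {A : Finset (Fin m) // A.card = 2} | i ∉ A.1}
        (doubleVertexGraph (pathG m))) = (m - 1) ^ 2 / 4 := by
  obtain ⟨n, rfl⟩ : ∃ n, m = n + 1 := ⟨m - 1, by have := i.pos; omega⟩
  rw [← indepNum_congr (cutPathPairIso i), indepNum_cutPathPairGraph, Nat.add_sub_cancel]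

/-- For `m ≥ 4` and every `i ∈ {1,…,m}`, the independence number of the induced subgraph
`T_m − R_i` of the double vertex graph of `P_m` (obtained by deleting every 2-subset
containing `i`) equals `⌊(m−1)²/4⌋ = α(T_{m−1})`. -/
theorem indepNum_Tm_delete_Ri (m : ℕ) (hm : 4 ≤ m) (i : Fin m) :
    indepNum (SimpleGraph.induce
        {A : {A : Finset (Fin m) // A.card = 2} | i ∉ A.1}
        (doubleVertexGraph (pathG m))) = (m - 1) ^ 2 / 4 :=
  indepNum_Tm_delete_Ri_general m i
end

section
/- For every integer m ≥ 3, the independence number of the double vertex graph of the cycle C_m equals ⌊(m/2)·⌊m/2⌋⌋. -/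
/-!
An independent set `s` of `C_m^(2)` meets every vertex `i` of `C_m` in at most `⌊m/2⌋` of its
2-sets, because the partners of `i` form an independent set of `C_m`; counting incidences gives
`2|s| ≤ m⌊m/2⌋`.

Conversely, along an edge `uv` of `C_m` the cyclic distance from a fixed vertex `w` changes by
exactly one, unless both distances equal `⌊m/2⌋`. So the chords `{x, x + d}` of odd length
`d < ⌊m/2⌋` are pairwise non-adjacent, and when `⌊m/2⌋` is odd the `⌊m/2⌋` pairwise disjoint
diameters `{x, x + ⌊m/2⌋}`, `x < ⌊m/2⌋`, can be added. That is `m⌊⌊m/2⌋/2⌋` chords, plus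
`⌊m/2⌋` when `⌊m/2⌋` is odd, which is `⌊m⌊m/2⌋/2⌋` in both cases.
-/

open Finset

theorem Finset.pair_eq_pair_iff {α : Type*} [DecidableEq α] {x y z w : α} :
    ({x, y} : Finset α) = {z, w} ↔ x = z ∧ y = w ∨ x = w ∧ y = z := by
  rw [← coe_inj, coe_pair, coe_pair, Set.pair_eq_pair_iff]

theorem Nat.card_filter_range_odd (n : ℕ) : #{d ∈ range n | Odd d} = n / 2 := by
  induction n with
  | zero => rfl
  | succ n ih =>
    rw [range_add_one, filter_insert]
    split_ifs with h <;> rw [Nat.odd_iff] at h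
    · rw [card_insert_of_notMem (by simp), ih]; omega
    · rw [ih]; omega

theorem Nat.mul_div_two_eq (m t : ℕ) :
    m * t / 2 = m * (t / 2) + if Odd t then m / 2 else 0 := by
  rcases Nat.even_or_odd' t with ⟨k, rfl | rfl⟩
  · rw [if_neg (Nat.not_odd_iff_even.2 (even_two_mul k)), mul_left_comm,
      Nat.mul_div_cancel_left _ two_pos, Nat.mul_div_cancel_left _ two_pos, add_zero]
  · rw [if_pos (odd_two_mul_add_one k), Nat.mul_add, mul_one, mul_left_comm,
      Nat.mul_add_div two_pos, Nat.mul_add_div two_pos, Nat.div_eq_of_lt one_lt_two, add_zero]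

section DoubleVertexGraph

variable {V : Type*} [DecidableEq V] {G : SimpleGraph V}

theorem doubleVertexGraph_adj_iff {A B : {A : Finset V // A.card = 2}} :
    (doubleVertexGraph G).Adj A B ↔
      ∃ w u v, G.Adj u v ∧ w ≠ u ∧ w ≠ v ∧ A.1 = {w, u} ∧ B.1 = {w, v} := by
  constructor
  · rintro ⟨-, h⟩
    obtain ⟨a, b, hab, hsd⟩ : ∃ a b, G.Adj a b ∧ A.1 \ B.1 ∪ B.1 \ A.1 = {a, b} := by
      simp_rw [← sup_eq_union, ← symmDiff_def]
      rcases h with h | ⟨a, b, hab, hsd⟩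
      · exact h
      · exact ⟨a, b, hab, symmDiff_comm A.1 B.1 ▸ hsd⟩
    have hcard : #(A.1 \ B.1) = #(B.1 \ A.1) := card_sdiff_comm (A.2.trans B.2.symm)
    have hsum : #(A.1 \ B.1) + #(B.1 \ A.1) = 2 := by
      rw [← card_union_of_disjoint disjoint_sdiff_sdiff, hsd, card_pair hab.ne]
    have hinter : #(A.1 ∩ B.1) = 1 := by
      have := card_sdiff_add_card_inter A.1 B.1
      omega
    obtain ⟨u, hu⟩ := card_eq_one.1 (show #(A.1 \ B.1) = 1 by omega)
    obtain ⟨v, hv⟩ := card_eq_one.1 (show #(B.1 \ A.1) = 1 by omega)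
    obtain ⟨w, hw⟩ := card_eq_one.1 hinter
    have hwAB : w ∈ A.1 ∧ w ∈ B.1 := mem_inter.1 (hw ▸ mem_singleton_self w)
    have huB : u ∉ B.1 := (mem_sdiff.1 (hu ▸ mem_singleton_self u)).2
    have hvA : v ∉ A.1 := (mem_sdiff.1 (hv ▸ mem_singleton_self v)).2
    have huv : G.Adj u v := by
      rw [hu, hv, ← insert_eq, pair_eq_pair_iff] at hsd
      rcases hsd with ⟨rfl, rfl⟩ | ⟨rfl, rfl⟩
      exacts [hab, hab.symm]
    refine ⟨w, u, v, huv, fun h => huB (h ▸ hwAB.2), fun h => hvA (h ▸ hwAB.1), ?_, ?_⟩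
    · rw [← sdiff_union_inter A.1 B.1, hu, hw, union_comm, ← insert_eq]
    · rw [← sdiff_union_inter B.1 A.1, hv, inter_comm, hw, union_comm, ← insert_eq]
  · rintro ⟨w, u, v, huv, hu, hv, hA, hB⟩
    refine ⟨?_, Or.inl ⟨u, v, huv, ?_⟩⟩
    · rw [Ne, Subtype.ext_iff, hA, hB, pair_eq_pair_iff]
      rintro (⟨-, h⟩ | ⟨h, -⟩)
      exacts [huv.ne h, hv h]
    · have := huv.ne
      rw [hA, hB]
      ext x
      simp only [mem_symmDiff, mem_insert, mem_singleton]
      grind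

theorem card_filter_mem_le_of_indep_doubleVertexGraph [Fintype V] {k : ℕ}
    (hG : ∀ t : Finset V, (∀ a ∈ t, ∀ b ∈ t, ¬ G.Adj a b) → #t ≤ k)
    {s : Finset {A : Finset V // A.card = 2}}
    (hs : ∀ A ∈ s, ∀ B ∈ s, ¬ (doubleVertexGraph G).Adj A B) (i : V) :
    #{A ∈ s | i ∈ A.1} ≤ k := by
  classical
  let link : Finset V := {j | ∃ A ∈ s, A.1 = {i, j}}
  refine (card_le_card_of_forall_subsingleton (fun A j => A.1 = {i, j}) (t := link) ?_ ?_).trans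
    (hG link ?_)
  · intro A hA
    obtain ⟨hAs, hi⟩ := mem_filter.1 hA
    obtain ⟨j, hj⟩ := card_eq_one.1 (show #(A.1.erase i) = 1 by rw [card_erase_of_mem hi, A.2])
    have hAij : A.1 = {i, j} := by rw [← insert_erase hi, hj]
    exact ⟨j, mem_filter.2 ⟨mem_univ j, A, hAs, hAij⟩, hAij⟩
  · intro j _ A hA B hB
    exact Subtype.ext (hA.2.trans hB.2.symm)
  · intro a ha b hb hab
    obtain ⟨A, hAs, hA⟩ := (mem_filter.1 ha).2
    obtain ⟨B, hBs, hB⟩ := (mem_filter.1 hb).2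
    have hia : i ≠ a := card_pair_eq_two_iff.1 (hA ▸ A.2)
    have hib : i ≠ b := card_pair_eq_two_iff.1 (hB ▸ B.2)
    exact hs A hAs B hBs (doubleVertexGraph_adj_iff.2 ⟨i, a, b, hab, hia, hib, hA, hB⟩)

theorem card_mul_two_le_of_indep_doubleVertexGraph [Fintype V] {k : ℕ}
    (hG : ∀ t : Finset V, (∀ a ∈ t, ∀ b ∈ t, ¬ G.Adj a b) → #t ≤ k)
    {s : Finset {A : Finset V // A.card = 2}}
    (hs : ∀ A ∈ s, ∀ B ∈ s, ¬ (doubleVertexGraph G).Adj A B) :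
    #s * 2 ≤ Fintype.card V * k := by
  rw [← card_univ]
  refine card_mul_le_card_mul (fun (A : {A : Finset V // A.card = 2}) i => i ∈ A.1)
    (fun A _ => ?_) (fun i _ => card_filter_mem_le_of_indep_doubleVertexGraph hG hs i)
  rw [bipartiteAbove, filter_univ_mem, A.2]

end DoubleVertexGraph

section Cycle

variable {m : ℕ}

theorem Fin.val_sub_eq_ite (a b : Fin m) :
    (a - b).val = if b.val ≤ a.val then a.val - b.val else m + a.val - b.val := by
  split_ifs with h
  · exact Fin.sub_val_of_le h
  · exact Fin.coe_sub_iff_lt.2 (not_le.1 h)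

theorem Fin.card_filter_odd_val_lt {t : ℕ} (ht : t ≤ m) :
    #{d : Fin m | Odd d.val ∧ d.val < t} = t / 2 := by
  rw [← Nat.card_filter_range_odd, ← card_map Fin.valEmbedding]
  congr 1
  ext d
  simp only [mem_map, mem_filter, mem_univ, true_and, Fin.valEmbedding_apply, mem_range]
  constructor
  · rintro ⟨d, ⟨hodd, hlt⟩, rfl⟩
    exact ⟨hlt, hodd⟩
  · rintro ⟨hlt, hodd⟩
    exact ⟨⟨d, by omega⟩, ⟨hodd, hlt⟩, rfl⟩

theorem cycleG_adj_add_one [NeZero m] (hm : 2 ≤ m) (x : Fin m) : (cycleG m).Adj x (x + 1) := by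
  have := x.isLt
  rw [cycleG, SimpleGraph.fromRel_adj, ne_eq, Fin.ext_iff, Fin.val_add_eq_ite, Fin.val_one',
    Nat.mod_eq_of_lt hm]
  split_ifs <;> omega

theorem card_mul_two_le_of_indep_cycleG (hm : 2 ≤ m) {t : Finset (Fin m)}
    (ht : ∀ a ∈ t, ∀ b ∈ t, ¬ (cycleG m).Adj a b) : #t * 2 ≤ m := by
  have : NeZero m := ⟨by omega⟩
  have hdisj : Disjoint t (t.image (· + 1)) := by
    refine disjoint_right.2 fun x hx hxt => ?_
    obtain ⟨y, hy, rfl⟩ := mem_image.1 hx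
    exact ht y hy _ hxt (cycleG_adj_add_one hm y)
  calc #t * 2 = #(t ∪ t.image (· + 1)) := by
        rw [card_union_of_disjoint hdisj, card_image_of_injective _ (add_left_injective 1),
          mul_two]
    _ ≤ m := (card_le_univ _).trans_eq (Fintype.card_fin m)

theorem card_le_of_indep_doubleVertexGraph_cycleG (hm : 2 ≤ m)
    {s : Finset {A : Finset (Fin m) // A.card = 2}}
    (hs : ∀ A ∈ s, ∀ B ∈ s, ¬ (doubleVertexGraph (cycleG m)).Adj A B) :
    #s ≤ m * (m / 2) / 2 := by
  have hcycle := card_mul_two_le_of_indep_doubleVertexGraph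
    (fun t ht => (Nat.le_div_iff_mul_le two_pos).2 (card_mul_two_le_of_indep_cycleG hm ht)) hs
  rw [Fintype.card_fin] at hcycle
  exact (Nat.le_div_iff_mul_le two_pos).2 hcycle

def cycleDist (x y : Fin m) : ℕ := min (x - y).val (y - x).val

theorem cycleDist_comm (x y : Fin m) : cycleDist x y = cycleDist y x := min_comm _ _

theorem cycleDist_eq_of_pair_eq {x y w u : Fin m} (h : ({x, y} : Finset (Fin m)) = {w, u}) :
    cycleDist w u = cycleDist x y := by
  rcases pair_eq_pair_iff.1 h with ⟨rfl, rfl⟩ | ⟨rfl, rfl⟩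
  exacts [rfl, cycleDist_comm _ _]

theorem cycleDist_of_adj {w u v : Fin m} (huv : (cycleG m).Adj u v) :
    cycleDist w v = cycleDist w u + 1 ∨ cycleDist w u = cycleDist w v + 1 ∨
      cycleDist w u = m / 2 ∧ cycleDist w v = m / 2 := by
  simp only [cycleG, SimpleGraph.fromRel_adj, cycleDist, Fin.val_sub_eq_ite, ne_eq,
    Fin.ext_iff] at huv ⊢
  have := w.isLt; have := u.isLt; have := v.isLt
  split_ifs <;> omega

variable (m) in
def chordParams : Finset (Fin m × Fin m) :=
  ({p | Odd p.2.val ∧ p.2.val < m / 2} : Finset (Fin m × Fin m)) ∪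
    ({p | Odd (m / 2) ∧ p.2.val = m / 2 ∧ p.1.val < m / 2} : Finset (Fin m × Fin m))

theorem mem_chordParams {x d : Fin m} :
    (x, d) ∈ chordParams m ↔ Odd d.val ∧ d.val ≤ m / 2 ∧ (d.val = m / 2 → x.val < m / 2) := by
  simp only [chordParams, mem_union, mem_filter, mem_univ, true_and]
  constructor
  · rintro (⟨hodd, hlt⟩ | ⟨hodd, heq, hx⟩)
    exacts [⟨hodd, hlt.le, fun h => absurd h hlt.ne⟩, ⟨heq ▸ hodd, heq.le, fun _ => hx⟩]
  · rintro ⟨hodd, hle, hx⟩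
    rcases hle.lt_or_eq with hlt | heq
    exacts [Or.inl ⟨hodd, hlt⟩, Or.inr ⟨heq ▸ hodd, heq, hx heq⟩]

variable [NeZero m]

theorem cycleDist_add (x d : Fin m) (hd : d.val ≤ m / 2) : cycleDist x (x + d) = d.val := by
  rw [cycleDist, sub_add_cancel_left, add_sub_cancel_left, Fin.val_neg]
  split_ifs with h
  · simp [h]
  · omega

def chord (p : Fin m × Fin m) : Finset (Fin m) := {p.1, p.1 + p.2}

theorem card_chordParams : #(chordParams m) = m * (m / 2) / 2 := by
  have hshort : #{p : Fin m × Fin m | Odd p.2.val ∧ p.2.val < m / 2} = m * (m / 2 / 2) := by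
    rw [← univ_product_univ, filter_product_right (fun d : Fin m => Odd d.val ∧ d.val < m / 2),
      card_product, card_univ, Fintype.card_fin, Fin.card_filter_odd_val_lt (by omega)]
  have hdiam : #{p : Fin m × Fin m | Odd (m / 2) ∧ p.2.val = m / 2 ∧ p.1.val < m / 2} =
      if Odd (m / 2) then m / 2 else 0 := by
    split_ifs with ht
    · have hlt : m / 2 < m := Nat.div_lt_self (Nat.pos_of_neZero m) one_lt_two
      have : ({p | Odd (m / 2) ∧ p.2.val = m / 2 ∧ p.1.val < m / 2} : Finset (Fin m × Fin m)) =
          ({x | x.val < m / 2} : Finset (Fin m)) ×ˢ {(⟨m / 2, hlt⟩ : Fin m)} := by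
        ext ⟨x, d⟩
        simp only [mem_filter, mem_univ, true_and, ht, mem_product, mem_singleton, Fin.ext_iff]
        exact and_comm
      rw [this, card_product, card_singleton, mul_one, Fin.card_filter_val_lt,
        min_eq_right hlt.le]
    · simp [ht]
  rw [chordParams, card_union_of_disjoint (disjoint_filter.2 fun p _ h1 h2 => h1.2.ne h2.2.1),
    hshort, hdiam, Nat.mul_div_two_eq]

theorem card_chord {x d : Fin m} (hp : (x, d) ∈ chordParams m) : #(chord (x, d)) = 2 := by
  refine card_pair_eq_two_iff.2 fun h => ?_
  have hd : d = 0 := left_eq_add.1 h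
  have hodd := (mem_chordParams.1 hp).1
  simp [hd] at hodd

theorem cycleDist_of_chord_eq {x d w u : Fin m} (hd : d.val ≤ m / 2)
    (h : chord (x, d) = {w, u}) : cycleDist w u = d.val :=
  (cycleDist_eq_of_pair_eq h).trans (cycleDist_add _ _ hd)

theorem chord_injOn : Set.InjOn chord (chordParams m : Set (Fin m × Fin m)) := by
  rintro ⟨x, d⟩ hp ⟨y, e⟩ hq h
  obtain ⟨hd, hdt, hdx⟩ := mem_chordParams.1 hp
  obtain ⟨-, het, hey⟩ := mem_chordParams.1 hq
  have hde : d = e := Fin.ext ((cycleDist_of_chord_eq hdt h).symm.trans (cycleDist_add y e het))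
  subst hde
  rcases pair_eq_pair_iff.1 h with ⟨hxy, -⟩ | ⟨hxy, hyx⟩
  · exact congrArg (·, d) hxy
  -- `x = y + d` and `y = x + d` force `2d = m`, and diameters start below `m / 2`.
  · simp only [Fin.ext_iff, Fin.val_add_eq_ite] at hxy hyx
    rw [Nat.odd_iff] at hd
    have := x.isLt; have := y.isLt
    split_ifs at hxy hyx <;> omega

theorem not_adj_of_chord {A B : {A : Finset (Fin m) // A.card = 2}} {x d y e : Fin m}
    (hp : (x, d) ∈ chordParams m) (hq : (y, e) ∈ chordParams m) (hA : A.1 = chord (x, d))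
    (hB : B.1 = chord (y, e)) : ¬ (doubleVertexGraph (cycleG m)).Adj A B := by
  intro hadj
  obtain ⟨w, u, v, huv, -, -, hAw, hBw⟩ := doubleVertexGraph_adj_iff.1 hadj
  obtain ⟨hd, hdt, hdx⟩ := mem_chordParams.1 hp
  obtain ⟨he, het, hey⟩ := mem_chordParams.1 hq
  have hdu : cycleDist w u = d.val := cycleDist_of_chord_eq hdt (hA.symm.trans hAw)
  have hev : cycleDist w v = e.val := cycleDist_of_chord_eq het (hB.symm.trans hBw)
  have hdiam : d.val = m / 2 ∧ e.val = m / 2 := by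
    rw [Nat.odd_iff] at hd he
    rcases cycleDist_of_adj (w := w) huv with h | h | h <;> omega
  -- Both chords are diameters starting below `m / 2`, so they are disjoint unless equal,
  -- while adjacent 2-sets share the vertex `w`.
  have hxy : x = y := by
    have hwA : w ∈ chord (x, d) := hA ▸ hAw ▸ mem_insert_self w {u}
    have hwB : w ∈ chord (y, e) := hB ▸ hBw ▸ mem_insert_self w {v}
    simp only [chord, mem_insert, mem_singleton, Fin.ext_iff, Fin.val_add_eq_ite] at hwA hwB
    have := hdx hdiam.1; have := hey hdiam.2
    split_ifs at hwA hwB <;> omega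
  exact hadj.ne (Subtype.ext (by rw [hA, hB, hxy, Fin.ext (hdiam.1.trans hdiam.2.symm)]))

theorem exists_indep_doubleVertexGraph_cycleG :
    ∃ s : Finset {A : Finset (Fin m) // A.card = 2}, #s = m * (m / 2) / 2 ∧
      ∀ A ∈ s, ∀ B ∈ s, ¬ (doubleVertexGraph (cycleG m)).Adj A B := by
  refine ⟨((chordParams m).image chord).subtype (·.card = 2), ?_, fun A hA B hB => ?_⟩
  · rw [card_subtype, filter_true_of_mem, card_image_of_injOn chord_injOn, card_chordParams]
    rintro _ hA
    obtain ⟨⟨x, d⟩, hp, rfl⟩ := mem_image.1 hA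
    exact card_chord hp
  · obtain ⟨⟨x, d⟩, hp, hpA⟩ := mem_image.1 (mem_subtype.1 hA)
    obtain ⟨⟨y, e⟩, hq, hqB⟩ := mem_image.1 (mem_subtype.1 hB)
    exact not_adj_of_chord hp hq hpA.symm hqB.symm

end Cycle

/-- For every integer `m ≥ 3`, the independence number of the double vertex graph of
the cycle `C_m` equals `⌊(m/2)·⌊m/2⌋⌋`. -/
theorem indepNum_doubleVertexGraph_cycle (m : ℕ) (hm : 3 ≤ m) :
    indepNum (doubleVertexGraph (cycleG m)) = m * (m / 2) / 2 := by
  have : NeZero m := ⟨by omega⟩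
  refine IsGreatest.csSup_eq ⟨exists_indep_doubleVertexGraph_cycleG, ?_⟩
  rintro _ ⟨s, rfl, hs⟩
  exact card_le_of_indep_doubleVertexGraph_cycleG (by omega) hs
end

section
/- For every integer m ≥ 2 and every nonempty subset S of {1,…,m}, the independence number of the induced subgraph of the pair graph C(C_m) obtained by deleting all 2-multisets containing an element of S is at most ⌊m²/4⌋. -/
/-!
Delete one vertex `q ∈ S` and label the remaining vertices of `C_m` by `0, …, m-2` along the path
`C_m - q`. A vertex `{a, b}` of `C(C_m) - R_q` with `a ≤ b` is sent to `(a, ⌊(b - a)/2⌋)`. In an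
independent set this is injective: two vertices with the same key share `a` and have second
coordinates differing by at most one, and `{a, b}`, `{a, b + 1}` are adjacent. Counting the keys
gives `∑_{l < m-1} (⌊l/2⌋ + 1) = ⌊m²/4⌋`.
-/

open Finset

theorem Finset.sum_range_div_two_add_one (n : ℕ) :
    ∑ l ∈ range n, (l / 2 + 1) = (n + 1) ^ 2 / 4 := by
  induction n with
  | zero => rfl
  | succ n ih =>
    rw [sum_range_succ, ih]
    obtain ⟨k, rfl | rfl⟩ := n.even_or_odd'
    · have h₁ : (2 * k + 1) ^ 2 = 4 * (k ^ 2 + k) + 1 := by ring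
      have h₂ : (2 * k + 1 + 1) ^ 2 = 4 * (k ^ 2 + 2 * k + 1) := by ring
      omega
    · have h₁ : (2 * k + 1 + 1) ^ 2 = 4 * (k ^ 2 + 2 * k + 1) := by ring
      have h₂ : (2 * k + 1 + 1 + 1) ^ 2 = 4 * (k ^ 2 + 3 * k + 2) + 1 := by ring
      omega

theorem Sym2.exists_eq_mk_and_le {V α : Type*} [LinearOrder α] (f : V → α) (u : Sym2 V) :
    ∃ a b, u = s(a, b) ∧ f a ≤ f b := by
  induction u using Sym2.ind with
  | _ a b =>
    rcases le_total (f a) (f b) with h | h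
    · exact ⟨a, b, rfl, h⟩
    · exact ⟨b, a, Sym2.eq_swap, h⟩

theorem indepNum_le_of_forall_isIndepSet {V : Type*} {G : SimpleGraph V} {k : ℕ}
    (h : ∀ s : Finset V, G.IsIndepSet s → s.card ≤ k) : indepNum G ≤ k :=
  csSup_le ⟨0, ∅, by simp⟩ fun _ ⟨s, hs, hindep⟩ =>
    hs ▸ h s fun a ha b hb _ => hindep a ha b hb

theorem SimpleGraph.IsIndepSet.map_subtype {V : Type*} {G : SimpleGraph V} {s : Set V}
    {t : Finset s} (ht : (G.induce s).IsIndepSet t) :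
    G.IsIndepSet (t.map (Function.Embedding.subtype _) : Set V) := by
  rintro _ hu' _ hv' huv
  obtain ⟨u, hu, rfl⟩ := mem_map.mp hu'
  obtain ⟨v, hv, rfl⟩ := mem_map.mp hv'
  exact ht hu hv (ne_of_apply_ne _ huv)

namespace PairGraph

variable {V : Type*} {G : SimpleGraph V}

theorem adj_mk_of_adj {a x y : V} (h : G.Adj x y) : (pairGraph G).Adj s(a, x) s(a, y) := by
  rw [pairGraph, SimpleGraph.fromRel_adj]
  exact ⟨fun he => h.ne (Sym2.congr_right.mp he), Or.inl ⟨a, x, y, h, rfl, rfl⟩⟩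

def key (p : V → ℕ) : Sym2 V → Σ _ : ℕ, ℕ :=
  Sym2.lift ⟨fun a b => ⟨min (p a) (p b), (max (p a) (p b) - min (p a) (p b)) / 2⟩,
    fun a b => by simp only [min_comm, max_comm]⟩

theorem key_mk {p : V → ℕ} {a b : V} (h : p a ≤ p b) :
    key p s(a, b) = ⟨p a, (p b - p a) / 2⟩ := by
  simp [key, h]

variable (p : V → ℕ) (hp : Function.Injective p) (hadj : ∀ x y, p y = p x + 1 → G.Adj x y)
include hp hadj

theorem key_injOn {t : Finset (Sym2 V)} (ht : (pairGraph G).IsIndepSet t) :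
    Set.InjOn (key p) t := by
  have nonadj : ∀ {a b d : V}, s(a, b) ∈ t → s(a, d) ∈ t → p d ≠ p b + 1 := fun hb hd hbd =>
    let hadj' := adj_mk_of_adj (hadj _ _ hbd)
    ht hb hd hadj'.ne hadj'
  intro u hu v hv huv
  obtain ⟨a, b, rfl, hab⟩ := Sym2.exists_eq_mk_and_le p u
  obtain ⟨c, d, rfl, hcd⟩ := Sym2.exists_eq_mk_and_le p v
  rw [key_mk hab, key_mk hcd, Sigma.mk.inj_iff, heq_iff_eq] at huv
  obtain ⟨hac, hbd⟩ := huv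
  obtain rfl := hp hac
  have h₁ := nonadj hu hv
  have h₂ := nonadj hv hu
  rw [hp (show p b = p d by omega)]

theorem card_le_of_isIndepSet {n : ℕ} {t : Finset (Sym2 V)} (ht : (pairGraph G).IsIndepSet t)
    (hlt : ∀ u ∈ t, ∀ x ∈ u, p x < n) : t.card ≤ (n + 1) ^ 2 / 4 := by
  have hmaps : Set.MapsTo (key p) t ((range n).sigma fun i => range ((n - 1 - i) / 2 + 1)) := by
    intro u hu
    obtain ⟨a, b, rfl, hab⟩ := Sym2.exists_eq_mk_and_le p u
    have ha := hlt _ hu a (Sym2.mem_mk_left a b)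
    have hb := hlt _ hu b (Sym2.mem_mk_right a b)
    simp only [key_mk hab, coe_sigma, Set.mem_sigma_iff, coe_range, Set.mem_Iio]
    omega
  calc t.card ≤ ((range n).sigma fun i => range ((n - 1 - i) / 2 + 1)).card :=
        card_le_card_of_injOn _ hmaps (key_injOn p hp hadj ht)
    _ = ∑ l ∈ range n, (l / 2 + 1) := by
        rw [card_sigma]
        simp only [card_range]
        exact sum_range_reflect (fun l => l / 2 + 1) n
    _ = (n + 1) ^ 2 / 4 := sum_range_div_two_add_one n

end PairGraph

namespace Fin

variable {n : ℕ}

theorem cycleG_adj_add_one (hn : 1 ≤ n) (x : Fin (n + 1)) : (cycleG (n + 1)).Adj x (x + 1) := by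
  rw [cycleG, SimpleGraph.fromRel_adj, val_add_one]
  have hx := x.is_le
  split_ifs with hlast
  · subst hlast
    refine ⟨fun h => ?_, Or.inr (Or.inr ⟨rfl, rfl⟩)⟩
    simp only [last_add_one, Fin.ext_iff, val_last, coe_ofNat_eq_mod, Nat.zero_mod] at h
    omega
  · exact ⟨fun h => by simp [Fin.ext_iff] at h; omega, Or.inl (Or.inl rfl)⟩

theorem cycleG_adj_of_val_sub_eq_succ {c x y : Fin (n + 1)}
    (h : (y - c).val = (x - c).val + 1) : (cycleG (n + 1)).Adj x y := by
  have hlt := (y - c).is_le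
  have hne : x - c ≠ last n := fun he => by rw [he, val_last] at h; omega
  have hsucc : y - c = x - c + 1 :=
    Fin.ext (by rw [val_add_one_of_lt (lt_last_iff_ne_last.mpr hne), h])
  obtain rfl : y = x + 1 := sub_left_injective (hsucc.trans (sub_add_eq_add_sub _ _ _))
  exact cycleG_adj_add_one (by omega) x

theorem val_sub_add_one_lt_of_ne {q x : Fin (n + 1)} (h : x ≠ q) : (x - (q + 1)).val < n := by
  refine lt_of_le_of_ne (x - (q + 1)).is_le fun hn => h ?_
  have : x - (q + 1) = -1 := Fin.ext (by rw [hn, coe_neg_one])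
  exact sub_eq_zero.mp (by simpa [sub_add_eq_sub_sub] using this)

end Fin

theorem indepNum_pairGraph_cycle_delete_general (m : ℕ) (S : Finset (Fin m))
    (hS : S.Nonempty) :
    indepNum (SimpleGraph.induce {s : Sym2 (Fin m) | ∀ i ∈ S, i ∉ s}
      (pairGraph (cycleG m))) ≤ m ^ 2 / 4 := by
  obtain ⟨q, hq⟩ := hS
  obtain ⟨n, rfl⟩ := Nat.exists_eq_add_one_of_ne_zero q.pos.ne'
  refine indepNum_le_of_forall_isIndepSet fun t ht => ?_
  rw [← card_map (Function.Embedding.subtype _)]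
  refine PairGraph.card_le_of_isIndepSet (fun x => (x - (q + 1)).val)
    (fun x y h => sub_left_injective (Fin.ext h)) (fun x y => Fin.cycleG_adj_of_val_sub_eq_succ)
    ht.map_subtype fun u hu x hx => Fin.val_sub_add_one_lt_of_ne ?_
  obtain ⟨u, -, rfl⟩ := mem_map.mp hu
  rintro rfl
  exact u.2 x hq hx

/-- For `m ≥ 2` and every nonempty `S ⊆ {1,…,m}`, the induced subgraph of the pair graph
`C(C_m)` obtained by deleting all 2-multisets containing an element of `S` has
independence number at most `⌊m²/4⌋`. -/
theorem indepNum_pairGraph_cycle_delete (m : ℕ) (hm : 2 ≤ m) (S : Finset (Fin m))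
    (hS : S.Nonempty) :
    indepNum (SimpleGraph.induce {s : Sym2 (Fin m) | ∀ i ∈ S, i ∉ s}
      (pairGraph (cycleG m))) ≤ m ^ 2 / 4 :=
  indepNum_pairGraph_cycle_delete_general m S hS
end
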